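/- arXiv:2412.15466 — 3 statements merged into one kernel-verified Lean document; each statement's English description precedes it below -/
import Mathlib

section
/- Let d ≥ 1, let W'_0, …, W'_{d-1} be unitary 2×2 complex matrices, let H be the d×d Fourier matrix, and set W = Σ_{i<d} W'_i ⊗ (H|i⟩⟨i|H†), a unitary on ℂ²⊗ℂ^d. Then for every linear map E on M₂(ℂ) and every ρ ∈ M₂(ℂ), tr₂[ W† · ((E ⊗ id_{M_d(ℂ)})( W (ρ ⊗ |0⟩⟨0|) W† )) · W ] = (1/d) Σ_{i<d} W'_i† · E(W'_i ρ W'_i†) · W'_i; that is, the supermap built from W realizes the uniform twirl of E by the set {W'_0, …, W'_{d-1}}. -/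
open Matrix
open scoped Kronecker BigOperators

/-- The `d × d` Fourier matrix, with entries `e^{2πi jk/d}/√d`. -/
noncomputable def fourierMat (d : ℕ) : Matrix (Fin d) (Fin d) ℂ :=
  Matrix.of fun j k : Fin d =>
    Complex.exp (2 * Real.pi * Complex.I * (j : ℕ) * (k : ℕ) / d) / (Real.sqrt d : ℂ)

/-- The action of `E ⊗ id` on `M₂(ℂ) ⊗ M_d(ℂ)`, acting as `E` on the first tensor
factor and as the identity on the second. -/
noncomputable def tensorMap (d : ℕ)
    (E : Matrix (Fin 2) (Fin 2) ℂ →ₗ[ℂ] Matrix (Fin 2) (Fin 2) ℂ)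
    (M : Matrix (Fin 2 × Fin d) (Fin 2 × Fin d) ℂ) :
    Matrix (Fin 2 × Fin d) (Fin 2 × Fin d) ℂ :=
  Matrix.of fun p q => E (Matrix.of fun a b => M (a, p.2) (b, q.2)) p.1 q.1

/-- Partial trace over the second tensor factor. -/
noncomputable def ptrace2 (n d : ℕ)
    (M : Matrix (Fin n × Fin d) (Fin n × Fin d) ℂ) : Matrix (Fin n) (Fin n) ℂ :=
  Matrix.of fun a b => ∑ m : Fin d, M (a, m) (b, m)

/-!
`W` is a controlled unitary whose control projections `Pᵢ = H|i⟩⟨i|H†` are orthogonal. Expanding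
`W† (E ⊗ id)(W (ρ ⊗ σ) W†) W` over the four control indices, the partial trace produces the
weights `tr(P_k P_i σ P_j P_l)`, which vanish unless all four indices agree; what survives is
`Σᵢ tr(Pᵢ σ) W'ᵢ† E(W'ᵢ ρ W'ᵢ†) W'ᵢ`. For `σ = |0⟩⟨0|` the weight is `|H₀ᵢ|² = 1/d`.
-/

lemma sum_fin_pow_eq_ite {K : Type*} [Field K] [DecidableEq K] {d : ℕ} {ω : K} (hω : ω ^ d = 1) :
    ∑ m : Fin d, ω ^ (m : ℕ) = if ω = 1 then (d : K) else 0 := by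
  rw [Fin.sum_univ_eq_sum_range (ω ^ ·) d]
  split_ifs with h
  · simp [h]
  · rw [geom_sum_eq h, hω, sub_self, zero_div]

lemma fourierMat_apply_eq_pow {d : ℕ} (j k : Fin d) :
    fourierMat d j k =
      Complex.exp (2 * Real.pi * Complex.I / d) ^ ((j : ℕ) * k) / (Real.sqrt d : ℂ) := by
  rw [fourierMat, of_apply, ← Complex.exp_nat_mul]
  push_cast
  ring_nf

lemma fourierMat_zero_apply {d : ℕ} (hd : 0 < d) (k : Fin d) :
    fourierMat d ⟨0, hd⟩ k = 1 / (Real.sqrt d : ℂ) := by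
  simp [fourierMat]

lemma star_sqrt_mul_sqrt (d : ℕ) : star (Real.sqrt d : ℂ) * (Real.sqrt d : ℂ) = d := by
  rw [Complex.star_def, Complex.conj_ofReal, ← Complex.ofReal_mul,
    Real.mul_self_sqrt (Nat.cast_nonneg d), Complex.ofReal_natCast]

lemma fourierMat_conjTranspose_mul_self {d : ℕ} (hd : d ≠ 0) :
    (fourierMat d)ᴴ * fourierMat d = 1 := by
  set ζ := Complex.exp (2 * Real.pi * Complex.I / d)
  have hζ : IsPrimitiveRoot ζ d := Complex.isPrimitiveRoot_exp d hd
  have hζ_unit : star ζ * ζ = 1 := by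
    rw [Complex.star_def, Complex.conj_mul', hζ.norm'_eq_one hd]; simp
  have hω_pow (i j : Fin d) : (star ζ ^ (i : ℕ) * ζ ^ (j : ℕ)) ^ d = 1 := by
    rw [mul_pow, ← pow_mul, ← pow_mul, mul_comm (i : ℕ), mul_comm (j : ℕ), pow_mul, pow_mul,
      ← star_pow, hζ.pow_eq_one]
    simp
  have hω_eq_one (i j : Fin d) : star ζ ^ (i : ℕ) * ζ ^ (j : ℕ) = 1 ↔ i = j := by
    constructor
    · intro h
      have : ζ ^ (j : ℕ) = ζ ^ (i : ℕ) := by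
        rw [← one_mul (ζ ^ (j : ℕ)), ← one_pow (i : ℕ), ← hζ_unit, mul_pow, mul_comm (star ζ ^ _),
          mul_assoc, h, mul_one]
      exact (Fin.ext (hζ.pow_inj j.isLt i.isLt this)).symm
    · rintro rfl
      rw [← mul_pow, hζ_unit, one_pow]
  ext i j
  have hentry : ((fourierMat d)ᴴ * fourierMat d) i j =
      (∑ m : Fin d, (star ζ ^ (i : ℕ) * ζ ^ (j : ℕ)) ^ (m : ℕ)) / d := by
    rw [mul_apply, Finset.sum_div]
    refine Finset.sum_congr rfl fun m _ => ?_
    rw [conjTranspose_apply, fourierMat_apply_eq_pow, fourierMat_apply_eq_pow, star_div₀,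
      div_mul_div_comm, star_sqrt_mul_sqrt, star_pow, mul_pow, ← pow_mul, ← pow_mul,
      mul_comm (i : ℕ), mul_comm (j : ℕ)]
  rw [hentry, sum_fin_pow_eq_ite (hω_pow i j), one_apply]
  simp only [hω_eq_one]
  split_ifs <;> simp [hd]

section ColumnProjection

variable {n α : Type*} [Fintype n] [DecidableEq n] [Semiring α] [StarRing α]

def colProj (U : Matrix n n α) (i : n) : Matrix n n α := U * single i i 1 * Uᴴ

lemma colProj_apply (U : Matrix n n α) (i a b : n) : colProj U i a b = U a i * star (U b i) := by
  simp [colProj, mul_apply, single, ite_and]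

lemma isHermitian_colProj (U : Matrix n n α) (i : n) : (colProj U i).IsHermitian :=
  isHermitian_mul_mul_conjTranspose U <| by simp [IsHermitian, conjTranspose_single]

lemma colProj_mul_colProj {U : Matrix n n α} (hU : Uᴴ * U = 1) (i j : n) :
    colProj U i * colProj U j = if i = j then colProj U i else 0 := by
  have hmiddle : colProj U i * colProj U j = U * (single i i 1 * single j j 1) * Uᴴ := by
    simp only [colProj, Matrix.mul_assoc, ← Matrix.mul_assoc Uᴴ U, hU, Matrix.one_mul]
  rw [hmiddle]
  split_ifs with h
  · rw [h, single_mul_single_same, one_mul, colProj]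
  · rw [single_mul_single_of_ne _ _ _ _ h, Matrix.mul_zero, Matrix.zero_mul]

end ColumnProjection

section PartialTrace

variable {n d : ℕ}

lemma ptrace2_sum {ι : Type*} (s : Finset ι) (f : ι → Matrix (Fin n × Fin d) (Fin n × Fin d) ℂ) :
    ptrace2 n d (∑ i ∈ s, f i) = ∑ i ∈ s, ptrace2 n d (f i) := by
  ext a b
  simp only [ptrace2, of_apply, Matrix.sum_apply]
  exact Finset.sum_comm

lemma ptrace2_kronecker (A : Matrix (Fin n) (Fin n) ℂ) (B : Matrix (Fin d) (Fin d) ℂ) :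
    ptrace2 n d (A ⊗ₖ B) = B.trace • A := by
  ext a b
  simp only [ptrace2, of_apply, kroneckerMap_apply, Matrix.smul_apply, trace, diag_apply,
    smul_eq_mul, Finset.sum_mul, mul_comm (A a b)]

end PartialTrace

section TensorMap

variable {d : ℕ} (E : Matrix (Fin 2) (Fin 2) ℂ →ₗ[ℂ] Matrix (Fin 2) (Fin 2) ℂ)

lemma tensorMap_sum {ι : Type*} (s : Finset ι) (f : ι → Matrix (Fin 2 × Fin d) (Fin 2 × Fin d) ℂ) :
    tensorMap d E (∑ i ∈ s, f i) = ∑ i ∈ s, tensorMap d E (f i) := by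
  ext p q
  have hblock : (of fun a b => (∑ i ∈ s, f i) (a, p.2) (b, q.2))
      = ∑ i ∈ s, of fun a b => f i (a, p.2) (b, q.2) := by
    ext a b
    simp only [of_apply, Matrix.sum_apply]
  rw [tensorMap, of_apply, hblock, map_sum, Matrix.sum_apply, Matrix.sum_apply]
  rfl

lemma tensorMap_kronecker (A : Matrix (Fin 2) (Fin 2) ℂ) (B : Matrix (Fin d) (Fin d) ℂ) :
    tensorMap d E (A ⊗ₖ B) = E A ⊗ₖ B := by
  ext p q
  have hblock : (of fun a b => (A ⊗ₖ B) (a, p.2) (b, q.2)) = B p.2 q.2 • A := by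
    ext a b
    simp [mul_comm]
  rw [tensorMap, of_apply, hblock, map_smul, Matrix.smul_apply, kroneckerMap_apply, smul_eq_mul,
    mul_comm]

end TensorMap

section ControlledSupermap

variable {d : ℕ} {ι : Type*} [DecidableEq ι] {P : ι → Matrix (Fin d) (Fin d) ℂ}

lemma trace_mul_mul_mul_of_orthogonal (hP : ∀ i j, P i * P j = if i = j then P i else 0)
    (σ : Matrix (Fin d) (Fin d) ℂ) (k i j l : ι) :
    trace (P k * (P i * σ * P j) * P l) =
      if k = i ∧ i = j ∧ j = l then trace (P i * σ) else 0 := by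
  rw [show P k * (P i * σ * P j) * P l = P k * P i * σ * (P j * P l) by
      simp only [Matrix.mul_assoc], trace_mul_comm, hP j l, hP k i]
  rcases eq_or_ne j l with rfl | hjl
  · rcases eq_or_ne k i with rfl | hki
    · rw [if_pos rfl, if_pos rfl, ← Matrix.mul_assoc, hP]
      rcases eq_or_ne j k with rfl | hjk
      · simp
      · simp [hjk, hjk.symm]
    · simp [hki]
  · simp [hjl]

lemma ptrace2_conj_tensorMap_conj [Fintype ι] (A : ι → Matrix (Fin 2) (Fin 2) ℂ)
    (hP : ∀ i j, P i * P j = if i = j then P i else 0) (hPH : ∀ i, (P i).IsHermitian)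
    {W : Matrix (Fin 2 × Fin d) (Fin 2 × Fin d) ℂ} (hW : W = ∑ i, A i ⊗ₖ P i)
    (E : Matrix (Fin 2) (Fin 2) ℂ →ₗ[ℂ] Matrix (Fin 2) (Fin 2) ℂ)
    (ρ : Matrix (Fin 2) (Fin 2) ℂ) (σ : Matrix (Fin d) (Fin d) ℂ) :
    ptrace2 2 d (Wᴴ * tensorMap d E (W * (ρ ⊗ₖ σ) * Wᴴ) * W) =
      ∑ i, trace (P i * σ) • ((A i)ᴴ * E (A i * ρ * (A i)ᴴ) * A i) := by
  have hWH : Wᴴ = ∑ i, (A i)ᴴ ⊗ₖ P i := by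
    simp only [hW, conjTranspose_sum, conjTranspose_kronecker, (hPH _).eq]
  have hinner : tensorMap d E (W * (ρ ⊗ₖ σ) * Wᴴ) =
      ∑ j, ∑ i, E (A i * ρ * (A j)ᴴ) ⊗ₖ (P i * σ * P j) := by
    rw [hWH, hW]
    simp only [Finset.sum_mul, Finset.mul_sum, ← mul_kronecker_mul, tensorMap_sum,
      tensorMap_kronecker]
  rw [hinner, hWH, hW]
  simp only [Finset.sum_mul, Finset.mul_sum, ← mul_kronecker_mul, ptrace2_sum, ptrace2_kronecker,
    trace_mul_mul_mul_of_orthogonal hP, ite_smul, zero_smul, ite_and, Finset.sum_ite_eq',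
    Finset.mem_univ, if_true]

end ControlledSupermap

theorem stmt0_general (d : ℕ) (hd : 1 ≤ d)
    (W' : Fin d → Matrix (Fin 2) (Fin 2) ℂ)
    (W : Matrix (Fin 2 × Fin d) (Fin 2 × Fin d) ℂ)
    (hW : W = ∑ i : Fin d,
      (W' i) ⊗ₖ (fourierMat d * single i i 1 * (fourierMat d)ᴴ))
    (E : Matrix (Fin 2) (Fin 2) ℂ →ₗ[ℂ] Matrix (Fin 2) (Fin 2) ℂ)
    (ρ : Matrix (Fin 2) (Fin 2) ℂ) :
    ptrace2 2 d
      (Wᴴ * tensorMap d E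
        (W * (ρ ⊗ₖ single (⟨0, hd⟩ : Fin d) (⟨0, hd⟩ : Fin d) 1) * Wᴴ) * W)
      = (1 / (d : ℂ)) •
          ∑ i : Fin d, (W' i)ᴴ * E (W' i * ρ * (W' i)ᴴ) * W' i := by
  have hF : (fourierMat d)ᴴ * fourierMat d = 1 :=
    fourierMat_conjTranspose_mul_self (Nat.one_le_iff_ne_zero.mp hd)
  rw [ptrace2_conj_tensorMap_conj W' (colProj_mul_colProj hF) (isHermitian_colProj _) hW,
    Finset.smul_sum]
  refine Finset.sum_congr rfl fun i _ => ?_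
  rw [trace_mul_single, colProj_apply, fourierMat_zero_apply, MulOpposite.op_one, one_smul,
    star_div₀, star_one, div_mul_div_comm, one_mul, mul_comm, star_sqrt_mul_sqrt]

theorem stmt0 (d : ℕ) (hd : 1 ≤ d)
    (W' : Fin d → Matrix (Fin 2) (Fin 2) ℂ)
    (hW' : ∀ i, W' i ∈ Matrix.unitaryGroup (Fin 2) ℂ)
    (W : Matrix (Fin 2 × Fin d) (Fin 2 × Fin d) ℂ)
    (hW : W = ∑ i : Fin d,
      (W' i) ⊗ₖ (fourierMat d * single i i 1 * (fourierMat d)ᴴ))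
    (E : Matrix (Fin 2) (Fin 2) ℂ →ₗ[ℂ] Matrix (Fin 2) (Fin 2) ℂ)
    (ρ : Matrix (Fin 2) (Fin 2) ℂ) :
    ptrace2 2 d
      (Wᴴ * tensorMap d E
        (W * (ρ ⊗ₖ single (⟨0, hd⟩ : Fin d) (⟨0, hd⟩ : Fin d) 1) * Wᴴ) * W)
      = (1 / (d : ℂ)) •
          ∑ i : Fin d, (W' i)ᴴ * E (W' i * ρ * (W' i)ᴴ) * W' i :=
  stmt0_general d hd W' W hW E ρ
end

section
/- Fix η ∈ ℂ and let D : M₂(ℂ) → M₂(ℂ) be the depolarizing-type map D(A) = (tr A / 2)·I + η·(A − (tr A / 2)·I). Let E₀, E₁ : M₂(ℂ) → M₂(ℂ) be trace-preserving linear maps. Define q₀ = tr[|0⟩⟨0| E₀(D(E₁(|0⟩⟨0|)))], q₁ = tr[|0⟩⟨0| E₀(D(E₁(|1⟩⟨1|)))], q₂ = tr[|0⟩⟨0| E₀(E₁(|0⟩⟨0|))], q₃ = tr[|0⟩⟨0| E₀(E₁(|1⟩⟨1|))]. Then q₀ − q₁ = η·(q₂ − q₃); consequently, if q₂ ≠ q₃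 then η = (q₀ − q₁)/(q₂ − q₃). -/
open Matrix

theorem stmt6 (η : ℂ)
    (D : Matrix (Fin 2) (Fin 2) ℂ → Matrix (Fin 2) (Fin 2) ℂ)
    (hD : ∀ A, D A = (A.trace / 2) • (1 : Matrix (Fin 2) (Fin 2) ℂ) +
      η • (A - (A.trace / 2) • (1 : Matrix (Fin 2) (Fin 2) ℂ)))
    (E₀ E₁ : Matrix (Fin 2) (Fin 2) ℂ →ₗ[ℂ] Matrix (Fin 2) (Fin 2) ℂ)
    (hE₀ : ∀ A, (E₀ A).trace = A.trace)
    (hE₁ : ∀ A, (E₁ A).trace = A.trace)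
    (q₀ q₁ q₂ q₃ : ℂ)
    (hq₀ : q₀ = (!![1, 0; 0, 0] * E₀ (D (E₁ !![1, 0; 0, 0]))).trace)
    (hq₁ : q₁ = (!![1, 0; 0, 0] * E₀ (D (E₁ !![0, 0; 0, 1]))).trace)
    (hq₂ : q₂ = (!![1, 0; 0, 0] * E₀ (E₁ !![1, 0; 0, 0])).trace)
    (hq₃ : q₃ = (!![1, 0; 0, 0] * E₀ (E₁ !![0, 0; 0, 1])).trace) :
    q₀ - q₁ = η * (q₂ - q₃) ∧ (q₂ ≠ q₃ → η = (q₀ - q₁) / (q₂ - q₃)) := by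
  have h0 : (!![1, 0; 0, 0] : Matrix (Fin 2) (Fin 2) ℂ).trace = 1 := by
    simp [Matrix.trace_fin_two]
  have h1 : (!![0, 0; 0, 1] : Matrix (Fin 2) (Fin 2) ℂ).trace = 1 := by
    simp [Matrix.trace_fin_two]
  have key : q₀ - q₁ = η * (q₂ - q₃) := by
    subst hq₀ hq₁ hq₂ hq₃
    rw [hD, hD, hE₁, hE₁, h0, h1]
    simp only [map_add, _root_.map_smul, map_sub, Matrix.mul_add, Matrix.mul_sub,
      Matrix.mul_smul, Matrix.trace_add, Matrix.trace_sub, Matrix.trace_smul,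
      smul_eq_mul]
    ring
  refine ⟨key, fun h => ?_⟩
  rw [eq_div_iff (sub_ne_zero.mpr h)]
  linear_combination -key
end

section
/- Let G be a finite subgroup of the group of 2×2 unitary complex matrices. For g ∈ G let Û_g denote the linear map ρ ↦ g ρ g† on M₂(ℂ), and for a linear map E : M₂(ℂ) → M₂(ℂ) define the twirl T[E] = (1/|G|) Σ_{g∈G} Û_{g}† ∘ E ∘ Û_g, where Û_g† = Û_{g⁻¹}. Then for every m ≥ 1, the uniform average over all sequences (g₁, …, g_m) ∈ G^m of the composite map E ∘ Û_{(g_m ⋯ g₁)⁻¹} ∘ (E ∘ Û_{g_m}) ∘ ⋯ ∘ (E ∘ Û_{g₁}) equals E ∘ (T[E])^m: (1/|G|^m) Σ_{(g₁,…,g_m)∈G^m} E ∘ Û_{(g_m⋯g₁)⁻¹} ∘ E ∘ Û_{g_m} ∘ ⋯ ∘ E ∘ Û_{g₁} = E ∘ (T[E])^m. -/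
open Matrix
open scoped BigOperators

/-- Conjugation `ρ ↦ g ρ g†` by a unitary matrix, as a linear endomorphism of `M₂(ℂ)`. -/
noncomputable def conjMap (g : Matrix.unitaryGroup (Fin 2) ℂ) :
    Module.End ℂ (Matrix (Fin 2) (Fin 2) ℂ) where
  toFun ρ := (g : Matrix (Fin 2) (Fin 2) ℂ) * ρ * ((g : Matrix (Fin 2) (Fin 2) ℂ))ᴴ
  map_add' ρ σ := by simp [Matrix.mul_add, Matrix.add_mul]
  map_smul' c ρ := by simp [Matrix.mul_smul, Matrix.smul_mul]

lemma conjMap_apply (g : Matrix.unitaryGroup (Fin 2) ℂ) (ρ : Matrix (Fin 2) (Fin 2) ℂ) :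
    conjMap g ρ = (g : Matrix (Fin 2) (Fin 2) ℂ) * ρ * ((g : Matrix (Fin 2) (Fin 2) ℂ))ᴴ := rfl

lemma conjMap_mul (x y : Matrix.unitaryGroup (Fin 2) ℂ) :
    conjMap (x * y) = conjMap x * conjMap y := by
  apply LinearMap.ext
  intro ρ
  simp [conjMap_apply, Module.End.mul_apply, Matrix.mul_assoc]

lemma conjMap_one : conjMap (1 : Matrix.unitaryGroup (Fin 2) ℂ) = 1 := by
  apply LinearMap.ext
  intro ρ
  simp [conjMap_apply, Module.End.one_apply]

lemma foldl_eq {α : Type*} (C : α → Module.End ℂ (Matrix (Fin 2) (Fin 2) ℂ))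
    (l : List α) (init : Module.End ℂ (Matrix (Fin 2) (Fin 2) ℂ)) :
    l.foldl (fun acc k => C k * acc) init = ((l.map C).reverse).prod * init := by
  induction l generalizing init with
  | nil => simp
  | cons x l ih =>
      rw [List.foldl_cons, ih, List.map_cons, List.reverse_cons, List.prod_append]
      simp [mul_assoc]

lemma key (G : Subgroup (Matrix.unitaryGroup (Fin 2) ℂ)) [Fintype G]
    (E : Module.End ℂ (Matrix (Fin 2) (Fin 2) ℂ)) (m : ℕ) :
    ∑ g : Fin m → G,
      conjMap ((((List.ofFn g).reverse.prod : G) : Matrix.unitaryGroup (Fin 2) ℂ))⁻¹ *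
        ((List.ofFn fun k => E * conjMap ((g k : G) : Matrix.unitaryGroup (Fin 2) ℂ)).reverse).prod
    = (∑ a : G, conjMap (((a : G) : Matrix.unitaryGroup (Fin 2) ℂ))⁻¹ *
        (E * conjMap ((a : G) : Matrix.unitaryGroup (Fin 2) ℂ))) ^ m := by
  induction m with
  | zero =>
      simp [conjMap_one]
  | succ m ih =>
      rw [← (Fin.snocEquiv (fun _ => G)).sum_comp, Fintype.sum_prod_type, Finset.sum_comm]
      have hterm : ∀ (a : G) (g' : Fin m → G),
          conjMap ((((List.ofFn (Fin.snocEquiv (fun _ => G) (a, g'))).reverse.prod : G) :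
              Matrix.unitaryGroup (Fin 2) ℂ))⁻¹ *
            ((List.ofFn fun k => E *
              conjMap (((Fin.snocEquiv (fun _ => G) (a, g') k : G) :
                Matrix.unitaryGroup (Fin 2) ℂ))).reverse).prod
          = conjMap (((a * (List.ofFn g').reverse.prod : G) :
              Matrix.unitaryGroup (Fin 2) ℂ))⁻¹ *
            ((E * conjMap ((a : G) : Matrix.unitaryGroup (Fin 2) ℂ)) *
              ((List.ofFn fun k => E *
                conjMap ((g' k : G) : Matrix.unitaryGroup (Fin 2) ℂ)).reverse).prod) := by
        intro a g'
        have h1 : List.ofFn (Fin.snocEquiv (fun _ => G) (a, g')) =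
            (List.ofFn g').concat a := by
          rw [List.ofFn_succ']
          congr 1
          · ext k
            simp [Fin.snocEquiv, Fin.snoc_castSucc]
          · simp [Fin.snocEquiv, Fin.snoc_last]
        have h2 : (List.ofFn fun k => E *
            conjMap (((Fin.snocEquiv (fun _ => G) (a, g') k : G) :
              Matrix.unitaryGroup (Fin 2) ℂ))) =
            (List.ofFn fun k => E *
              conjMap ((g' k : G) : Matrix.unitaryGroup (Fin 2) ℂ)).concat
              (E * conjMap ((a : G) : Matrix.unitaryGroup (Fin 2) ℂ)) := by
          rw [List.ofFn_succ']
          congr 1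
          · ext k
            simp [Fin.snocEquiv, Fin.snoc_castSucc]
          · simp [Fin.snocEquiv, Fin.snoc_last]
        rw [h1, h2]
        simp [List.concat_eq_append, List.reverse_append, mul_assoc]
      simp only [hterm]
      have hinner : ∀ g' : Fin m → G,
          (∑ a : G,
            conjMap (((a * (List.ofFn g').reverse.prod : G) :
              Matrix.unitaryGroup (Fin 2) ℂ))⁻¹ *
            ((E * conjMap ((a : G) : Matrix.unitaryGroup (Fin 2) ℂ)) *
              ((List.ofFn fun k => E *
                conjMap ((g' k : G) : Matrix.unitaryGroup (Fin 2) ℂ)).reverse).prod))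
          = (∑ b : G, conjMap (((b : G) : Matrix.unitaryGroup (Fin 2) ℂ))⁻¹ *
              (E * conjMap ((b : G) : Matrix.unitaryGroup (Fin 2) ℂ))) *
            (conjMap ((((List.ofFn g').reverse.prod : G) :
                Matrix.unitaryGroup (Fin 2) ℂ))⁻¹ *
              ((List.ofFn fun k => E *
                conjMap ((g' k : G) : Matrix.unitaryGroup (Fin 2) ℂ)).reverse).prod) := by
        intro g'
        set p : G := (List.ofFn g').reverse.prod with hp
        rw [← Equiv.sum_comp (Equiv.mulRight p⁻¹), Finset.sum_mul]
        apply Finset.sum_congr rfl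
        intro b _
        simp only [Equiv.coe_mulRight, inv_mul_cancel_right, MulMemClass.coe_mul,
          InvMemClass.coe_inv, conjMap_mul, mul_assoc, inv_mul_cancel, mul_one]
      simp only [hinner]
      rw [← Finset.mul_sum, ih, pow_succ']
  
theorem stmt8 (G : Subgroup (Matrix.unitaryGroup (Fin 2) ℂ)) [Fintype G]
    (E : Module.End ℂ (Matrix (Fin 2) (Fin 2) ℂ)) (m : ℕ) (hm : 1 ≤ m) :
    (1 / (Fintype.card G : ℂ) ^ m) •
        ∑ g : Fin m → G,
          (E ∘ₗ conjMap ((((List.ofFn g).reverse.prod : G) :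
              Matrix.unitaryGroup (Fin 2) ℂ))⁻¹) ∘ₗ
            (List.finRange m).foldl
              (fun acc k =>
                (E ∘ₗ conjMap ((g k : G) : Matrix.unitaryGroup (Fin 2) ℂ)) ∘ₗ acc)
              LinearMap.id
      = E ∘ₗ
          (((1 / (Fintype.card G : ℂ)) •
            ∑ g : G,
              conjMap (((g : G) : Matrix.unitaryGroup (Fin 2) ℂ))⁻¹ ∘ₗ E ∘ₗ
                conjMap ((g : G) : Matrix.unitaryGroup (Fin 2) ℂ) :
            Module.End ℂ (Matrix (Fin 2) (Fin 2) ℂ)) ^ m) := by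
  simp only [← Module.End.mul_eq_comp, ← Module.End.one_eq_id]
  have hfold : ∀ g : Fin m → G,
      (List.finRange m).foldl
        (fun acc k => (E * conjMap ((g k : G) : Matrix.unitaryGroup (Fin 2) ℂ)) * acc)
        (1 : Module.End ℂ (Matrix (Fin 2) (Fin 2) ℂ))
      = ((List.ofFn fun k => E *
          conjMap ((g k : G) : Matrix.unitaryGroup (Fin 2) ℂ)).reverse).prod := by
    intro g
    rw [foldl_eq, mul_one, List.ofFn_eq_map]
  simp only [hfold]
  simp only [mul_assoc]
  rw [← Finset.mul_sum, key G E m]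
  rw [smul_pow, mul_smul_comm]
  congr 1
  rw [one_div, one_div, inv_pow]
end
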